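/- arXiv:1102.2141 — 6 statements merged into one kernel-verified Lean document; each statement's English description precedes it below -/
import Mathlib

section
/- Let M be a multigraph on n vertices such that 0 ≤ w(xy) ≤ 4 for every pair of distinct vertices x,y, and w(xy) + w(xz) + w(yz) ≤ 10 for every triple of distinct vertices x,y,z. Then e(M) ≤ m(n). -/
/-! Induction on the vertex set, removing two vertices at a time. If no pair has weight `4`, the
total weight is at most `3 * (n choose 2) ≤ m n`. Otherwise take `x, y` with `w xy = 4`: by the
triangle condition every other vertex `z` has `w xz + w yz ≤ 6`, so deleting `x` and `y` removes
at most `4 + 6 (n - 2) = m n - m (n - 2)` edges. -/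

def m (n : ℕ) : ℕ := if Even n then 3 * n ^ 2 / 2 - n else (3 * n ^ 2 - 1) / 2 - n

open Finset

lemma m_two_mul (k : ℕ) : m (2 * k) = 6 * k ^ 2 - 2 * k := by
  have h : 3 * (2 * k) ^ 2 = 2 * (6 * k ^ 2) := by ring
  simp only [m, even_two_mul, if_true]
  omega

lemma m_two_mul_add_one (k : ℕ) : m (2 * k + 1) = 6 * k ^ 2 + 4 * k := by
  have h : 3 * (2 * k + 1) ^ 2 = 2 * (6 * k ^ 2 + 6 * k + 1) + 1 := by ring
  simp only [m, Nat.not_even_two_mul_add_one, if_false]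
  omega

lemma m_add_two (n : ℕ) : m (n + 2) = m n + 6 * n + 4 := by
  have hsq (k : ℕ) : (k + 1) ^ 2 = k ^ 2 + 2 * k + 1 := by ring
  obtain ⟨k, rfl | rfl⟩ := Nat.even_or_odd' n
  · rw [show 2 * k + 2 = 2 * (k + 1) by ring, m_two_mul, m_two_mul, hsq]
    have := Nat.le_self_pow two_ne_zero k
    omega
  · rw [show 2 * k + 1 + 2 = 2 * (k + 1) + 1 by ring, m_two_mul_add_one, m_two_mul_add_one, hsq]
    ring

lemma three_mul_choose_two_le_m : ∀ n : ℕ, 3 * n.choose 2 ≤ m n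
  | 0 => by decide
  | 1 => by decide
  | n + 2 => by
    have := three_mul_choose_two_le_m n
    have hchoose : (n + 2).choose 2 = n.choose 2 + 2 * n + 1 := by
      simp only [Nat.choose_succ_succ', Nat.choose_zero_right, zero_add, Nat.choose_one_right,
        Nat.reduceAdd]
      ring
    rw [m_add_two, hchoose]
    omega

section

variable {V : Type*} [DecidableEq V]

def edgeWeight (w : Sym2 V → ℕ) (s : Finset V) : ℕ := ∑ p ∈ s.sym2 with ¬ p.IsDiag, w p

lemma edgeWeight_insert (w : Sym2 V → ℕ) {a : V} {s : Finset V} (ha : a ∉ s) :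
    edgeWeight w (insert a s) = edgeWeight w s + ∑ b ∈ s, w s(a, b) := by
  rw [← cons_eq_insert _ _ ha, edgeWeight, sym2_cons, filter_disjUnion, sum_disjUnion, filter_map,
    sum_map, filter_cons_of_neg _ _ _ _ (by simp), add_comm]
  congr 1
  refine sum_congr (filter_true_of_mem fun b hb => ?_) fun b _ => rfl
  simpa using (ne_of_mem_of_not_mem hb ha).symm

lemma edgeWeight_le_mul_choose_two (w : Sym2 V → ℕ) {c : ℕ} {s : Finset V}
    (hc : ∀ x ∈ s, ∀ y ∈ s, x ≠ y → w s(x, y) ≤ c) :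
    edgeWeight w s ≤ c * (#s).choose 2 := by
  induction s using Finset.induction_on with
  | empty => simp [edgeWeight]
  | insert a s ha ih =>
    have hsum : ∑ b ∈ s, w s(a, b) ≤ c * #s := by
      simpa [mul_comm] using sum_le_card_nsmul s _ c fun b hb =>
        hc a (mem_insert_self a s) b (mem_insert_of_mem hb) (ne_of_mem_of_not_mem hb ha).symm
    have hs := ih fun x hx y hy => hc x (mem_insert_of_mem hx) y (mem_insert_of_mem hy)
    rw [edgeWeight_insert w ha, card_insert_of_notMem ha, Nat.choose_succ_succ',
      Nat.choose_one_right]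
    linarith

theorem edgeWeight_le_m (w : Sym2 V → ℕ) (h4 : ∀ x y : V, x ≠ y → w s(x, y) ≤ 4)
    (h10 : ∀ x y z : V, x ≠ y → x ≠ z → y ≠ z →
      w s(x, y) + w s(x, z) + w s(y, z) ≤ 10)
    (s : Finset V) : edgeWeight w s ≤ m #s := by
  induction s using Finset.strongInduction with
  | H s ih =>
  by_cases hheavy : ∃ x ∈ s, ∃ y ∈ s, x ≠ y ∧ 4 ≤ w s(x, y)
  · obtain ⟨x, hx, y, hy, hxy, hw⟩ := hheavy
    set t := (s.erase x).erase y
    have hyt : y ∉ t := notMem_erase y _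
    have hxt : x ∉ t := fun h => notMem_erase x s (mem_of_mem_erase h)
    have hs : s = insert x (insert y t) := by
      rw [insert_erase (mem_erase.2 ⟨hxy.symm, hy⟩), insert_erase hx]
    have hxyt : x ∉ insert y t := by simp [hxy, hxt]
    have hcard : #s = #t + 2 := by rw [hs, card_insert_of_notMem hxyt, card_insert_of_notMem hyt]
    have hpair : ∀ b ∈ t, w s(x, b) + w s(y, b) ≤ 6 := fun b hb => by
      have := h10 x y b hxy (ne_of_mem_of_not_mem hb hxt).symm (ne_of_mem_of_not_mem hb hyt).symm
      omega
    have hpairs : ∑ b ∈ t, (w s(x, b) + w s(y, b)) ≤ 6 * #t := by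
      simpa [mul_comm] using sum_le_card_nsmul t _ 6 hpair
    have hxy4 := h4 x y hxy
    have hih := ih t ((erase_subset y _).trans_ssubset (erase_ssubset hx))
    calc edgeWeight w s = edgeWeight w t + w s(x, y) + ∑ b ∈ t, (w s(x, b) + w s(y, b)) := by
          rw [hs, edgeWeight_insert w hxyt, edgeWeight_insert w hyt, sum_insert hyt,
            sum_add_distrib]
          ring
      _ ≤ m #t + 4 + 6 * #t := by gcongr
      _ = m #s := by rw [hcard, m_add_two]; ring
  · push Not at hheavy
    calc edgeWeight w s ≤ 3 * (#s).choose 2 :=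
          edgeWeight_le_mul_choose_two w fun x hx y hy hxy =>
            Nat.le_of_lt_succ (hheavy x hx y hy hxy)
      _ ≤ m #s := three_mul_choose_two_le_m _

end

/-- The multigraph lemma: if every pair has multiplicity at most 4 and every triple
has total multiplicity at most 10, then the total number of edges is at most `m n`. -/
theorem multigraph_lemma {V : Type*} [Fintype V] [DecidableEq V] (n : ℕ)
    (hcard : Fintype.card V = n) (w : Sym2 V → ℕ)
    (h4 : ∀ x y : V, x ≠ y → w s(x, y) ≤ 4)
    (h10 : ∀ x y z : V, x ≠ y → x ≠ z → y ≠ z →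
      w s(x, y) + w s(x, z) + w s(y, z) ≤ 10) :
    ∑ p ∈ Finset.univ.filter (fun p : Sym2 V => ¬ p.IsDiag), w p ≤ m n := by
  simpa [edgeWeight, hcard] using edgeWeight_le_m w h4 h10 univ
end

section
/- For every n, the multigraph M₁(n) defined by taking a balanced partition of n vertices into two parts A and B (of sizes ⌊n/2⌋ and ⌈n/2⌉), giving each pair with one vertex in A and one in B multiplicity 4 and each pair inside a part multiplicity 2, satisfies w(xy) ≤ 4 for every pair, w(xy)+w(xz)+w(yz) ≤ 10 for every triple of distinct vertices, and e(M₁(n)) = m(n). In particular the bound of the multigraph lemma is sharp for every n. -/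
/-- The multigraph `M₁(n)` on `Fin n`: take the balanced partition into
`A = {i : i < ⌊n/2⌋}` (of size `⌊n/2⌋`) and its complement (of size `⌈n/2⌉`);
pairs crossing the partition get multiplicity 4, pairs inside a part get
multiplicity 2. -/
def M1 (n : ℕ) : Sym2 (Fin n) → ℕ :=
  Sym2.lift ⟨fun x y =>
      if x = y then 0 else if ((x : ℕ) < n / 2 ↔ (y : ℕ) < n / 2) then 2 else 4,
    fun x y => by simp only [eq_comm, iff_comm]⟩

lemma card_filter_lt (n : ℕ) :
    (Finset.univ.filter fun y : Fin n => (y : ℕ) < n / 2).card = n / 2 := by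
  have h : ∀ m ∈ Finset.range (n / 2), m < n := fun m hm => by
    have := Finset.mem_range.mp hm
    have := Nat.div_le_self n 2
    omega
  have : (Finset.univ.filter fun y : Fin n => (y : ℕ) < n / 2)
      = (Finset.range (n / 2)).attachFin h := by
    ext y; simp [Finset.mem_attachFin]
  rw [this, Finset.card_attachFin, Finset.card_range]

lemma card_filter_not_lt (n : ℕ) :
    (Finset.univ.filter fun y : Fin n => n / 2 ≤ (y : ℕ)).card = n - n / 2 := by
  have h := Finset.card_filter_add_card_filter_not
    (s := (Finset.univ : Finset (Fin n))) (p := fun y : Fin n => (y : ℕ) < n / 2)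
  have h2 := card_filter_lt n
  simp only [Finset.card_univ, Fintype.card_fin, not_lt] at h
  omega

lemma inner_g (n : ℕ) (x : Fin n) :
    ∑ y : Fin n, (if ((x : ℕ) < n / 2 ↔ (y : ℕ) < n / 2) then 2 else 4)
      = if (x : ℕ) < n / 2 then 2 * (n / 2) + 4 * (n - n / 2)
        else 2 * (n - n / 2) + 4 * (n / 2) := by
  by_cases hx : (x : ℕ) < n / 2
  · simp only [hx, true_iff, if_pos hx]
    rw [Finset.sum_ite]
    simp [card_filter_lt, card_filter_not_lt, mul_comm]
  · simp only [hx, false_iff, if_neg hx]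
    rw [Finset.sum_ite]
    simp [card_filter_lt, card_filter_not_lt, mul_comm]

lemma double_sum (n : ℕ) :
    (∑ x : Fin n, ∑ y : Fin n,
      (if x = y then 0 else if ((x : ℕ) < n / 2 ↔ (y : ℕ) < n / 2) then 2 else 4)) + 2 * n
    = (n / 2) * (2 * (n / 2) + 4 * (n - n / 2))
      + (n - n / 2) * (2 * (n - n / 2) + 4 * (n / 2)) := by
  have key : ∀ x : Fin n, (∑ y : Fin n,
      (if x = y then 0 else if ((x : ℕ) < n / 2 ↔ (y : ℕ) < n / 2) then 2 else 4)) + 2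
      = if (x : ℕ) < n / 2 then 2 * (n / 2) + 4 * (n - n / 2)
        else 2 * (n - n / 2) + 4 * (n / 2) := by
    intro x
    have : (∑ y : Fin n,
        (if x = y then 0 else if ((x : ℕ) < n / 2 ↔ (y : ℕ) < n / 2) then 2 else 4))
        + (∑ y : Fin n, (if x = y then 2 else 0))
        = ∑ y : Fin n, (if ((x : ℕ) < n / 2 ↔ (y : ℕ) < n / 2) then 2 else 4) := by
      rw [← Finset.sum_add_distrib]
      apply Finset.sum_congr rfl
      intro y _
      by_cases hxy : x = y
      · subst hxy; simp
      · simp [hxy]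
    rw [Finset.sum_ite_eq] at this
    simp only [Finset.mem_univ, if_pos] at this
    rw [this, inner_g]
  calc (∑ x : Fin n, ∑ y : Fin n,
      (if x = y then 0 else if ((x : ℕ) < n / 2 ↔ (y : ℕ) < n / 2) then 2 else 4)) + 2 * n
      = ∑ x : Fin n, ((∑ y : Fin n,
        (if x = y then 0 else if ((x : ℕ) < n / 2 ↔ (y : ℕ) < n / 2) then 2 else 4)) + 2) := by
        rw [Finset.sum_add_distrib]; simp [mul_comm]
    _ = ∑ x : Fin n, (if (x : ℕ) < n / 2 then 2 * (n / 2) + 4 * (n - n / 2)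
        else 2 * (n - n / 2) + 4 * (n / 2)) := by
        exact Finset.sum_congr rfl fun x _ => key x
    _ = _ := by
        rw [Finset.sum_ite]
        simp [card_filter_lt, card_filter_not_lt, mul_comm]

set_option maxHeartbeats 1000000 in
theorem M1_extremal (n : ℕ) :
    (∀ x y : Fin n, x ≠ y → M1 n s(x, y) ≤ 4) ∧
    (∀ x y z : Fin n, x ≠ y → x ≠ z → y ≠ z →
      M1 n s(x, y) + M1 n s(x, z) + M1 n s(y, z) ≤ 10) ∧
    ∑ p ∈ Finset.univ.filter (fun p : Sym2 (Fin n) => ¬ p.IsDiag), M1 n p = m n := by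
  refine ⟨?_, ?_, ?_⟩
  · intro x y hxy
    simp only [M1, Sym2.lift_mk]
    split_ifs <;> omega
  · intro x y z hxy hxz hyz
    simp only [M1, Sym2.lift_mk]
    by_cases hx : (x : ℕ) < n / 2 <;> by_cases hy : (y : ℕ) < n / 2 <;>
      by_cases hz : (z : ℕ) < n / 2 <;>
      simp [hxy, hxz, hyz, hx, hy, hz]
  · -- the sum
    set T := ∑ p ∈ Finset.univ.filter (fun p : Sym2 (Fin n) => ¬ p.IsDiag), M1 n p with hT
    have step1 : T = ∑ i ∈ Finset.univ.offDiag.filter (fun i : Fin n × Fin n => i.1 < i.2),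
        M1 n s(i.1, i.2) := by
      have e : (Finset.univ : Finset (Fin n)).sym2 = (Finset.univ : Finset (Sym2 (Fin n))) :=
        Finset.sym2_univ _
      rw [hT, ← e]
      have h := Finset.sum_sym2_filter_not_isDiag (Finset.univ : Finset (Fin n)) (M1 n)
      convert h using 2 <;> · ext p; simp
    have step2 : 2 * T = ∑ i ∈ Finset.univ.offDiag, M1 n s(i.1, i.2) := by
      rw [two_mul]
      nth_rewrite 2 [step1]
      rw [step1]
      rw [← Finset.sum_filter_add_sum_filter_not Finset.univ.offDiag
        (fun i : Fin n × Fin n => i.1 < i.2)]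
      congr 1
      apply Finset.sum_nbij' (fun i => Prod.swap i) (fun i => Prod.swap i)
      · intro i hi
        simp only [Finset.mem_filter, Finset.mem_offDiag] at hi ⊢
        obtain ⟨⟨_, _, hne⟩, hlt⟩ := hi
        refine ⟨⟨by simp, by simp, ?_⟩, ?_⟩
        · simpa [Prod.swap] using fun h => hne h.symm
        · simp only [Prod.swap]
          omega
      · intro i hi
        simp only [Finset.mem_filter, Finset.mem_offDiag] at hi ⊢
        obtain ⟨⟨_, _, hne⟩, hlt⟩ := hi
        refine ⟨⟨by simp, by simp, ?_⟩, ?_⟩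
        · simpa [Prod.swap] using fun h => hne h.symm
        · simp only [Prod.swap]
          omega
      · intro i _; simp
      · intro i _; simp
      · intro i _
        rw [Sym2.eq_swap]
        rfl
    have step3 : (∑ i ∈ Finset.univ.offDiag, M1 n s(i.1, i.2))
        = ∑ x : Fin n, ∑ y : Fin n,
          (if x = y then 0 else if ((x : ℕ) < n / 2 ↔ (y : ℕ) < n / 2) then 2 else 4) := by
      have e1 : (∑ i ∈ Finset.univ.offDiag, M1 n s(i.1, i.2))
          = ∑ i ∈ Finset.univ ×ˢ Finset.univ, M1 n s(i.1, i.2) := by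
        apply Finset.sum_subset
        · intro i hi
          simp only [Finset.mem_offDiag] at hi
          simp [Finset.mem_product]
        · intro i _ hi
          simp only [Finset.mem_offDiag, Finset.mem_univ, true_and, not_and, not_not] at hi
          have h12 : i.1 = i.2 := by tauto
          simp [M1, h12]
      rw [e1, ← Finset.sum_product']
      exact Finset.sum_congr rfl fun i _ => by obtain ⟨a, b⟩ := i; simp [M1]
    have hds := double_sum n
    rw [← step3, ← step2] at hds
    have hq := Nat.div_add_mod n 2
    have hmod : n % 2 = 0 ∨ n % 2 = 1 := Nat.mod_two_eq_zero_or_one n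
    rcases hmod with h0 | h1
    · -- even
      have hn : n = 2 * (n / 2) := by omega
      have heven : Even n := ⟨n / 2, by omega⟩
      rw [m, if_pos heven]
      set q := n / 2 with hqdef
      have hb : n - q = q := by omega
      rw [hb] at hds
      have hsq : 3 * n ^ 2 / 2 = 6 * (q * q) := by
        have : 3 * n ^ 2 = 2 * (6 * (q * q)) := by rw [hn]; ring
        rw [this, Nat.mul_div_cancel_left _ (by norm_num)]
      rw [hsq]
      have hds' : 2 * T + 2 * n = 12 * (q * q) := by rw [hds]; ring
      omega
    · have hodd : ¬ Even n := by
        simp [Nat.even_iff, h1]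
      rw [m, if_neg hodd]
      set q := n / 2 with hqdef
      have hn : n = 2 * q + 1 := by omega
      have hb : n - q = q + 1 := by omega
      rw [hb] at hds
      have hsq : (3 * n ^ 2 - 1) / 2 = 6 * (q * q) + 6 * q + 1 := by
        have : 3 * n ^ 2 - 1 = 2 * (6 * (q * q) + 6 * q + 1) := by
          rw [hn]; ring_nf; omega
        rw [this, Nat.mul_div_cancel_left _ (by norm_num)]
      rw [hsq]
      have hds' : 2 * T + 2 * n = 12 * (q * q) + 12 * q + 2 := by rw [hds]; ring
      omega
end

section
/- Let G be a 3-graph on 6 vertices that contains all 3-element subsets of its vertex set as edges except possibly for at most two missing triples, and if exactly two triples are missing then they share a common vertex. Then G contains a copy of F_{3,3}. -/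
/-- `G` contains a copy of `F₃,₃`: six distinct vertices `a b c x y z` such that
`{a,b,c}` and all nine triples with one vertex in `{a,b,c}` and two in `{x,y,z}`
are edges of `G`. -/
def HasF33 {V : Type*} [DecidableEq V] (G : Finset (Finset V)) : Prop :=
  ∃ a b c x y z : V, ({a, b, c, x, y, z} : Finset V).card = 6 ∧
    ({a, b, c} : Finset V) ∈ G ∧
    ({a, x, y} : Finset V) ∈ G ∧ ({a, x, z} : Finset V) ∈ G ∧ ({a, y, z} : Finset V) ∈ G ∧
    ({b, x, y} : Finset V) ∈ G ∧ ({b, x, z} : Finset V) ∈ G ∧ ({b, y, z} : Finset V) ∈ G ∧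
    ({c, x, y} : Finset V) ∈ G ∧ ({c, x, z} : Finset V) ∈ G ∧ ({c, y, z} : Finset V) ∈ G

section F33Aux
variable {V : Type*} [DecidableEq V]

lemma ne_of_mem_notMem' {w : V} {s t : Finset V} (h : w ∈ s) (h' : w ∉ t) : s ≠ t :=
  fun e => h' (e ▸ h)

lemma mixed_ne {a b c α β γ : V} {e s₀ : Finset V}
    (hb : e = s₀ ∨ (e ∩ ({a, b, c} : Finset V)).card = 2)
    (hα : α ∈ ({a, b, c} : Finset V)) (hαs : α ∉ s₀)
    (hβ : β ∉ ({a, b, c} : Finset V)) (hγ : γ ∉ ({a, b, c} : Finset V)) :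
    ({α, β, γ} : Finset V) ≠ e := by
  rcases hb with rfl | h2
  · exact ne_of_mem_notMem' (Finset.mem_insert_self _ _) hαs
  · intro h
    have hi : ({α, β, γ} : Finset V) ∩ {a, b, c} = {α} := by
      ext w
      simp only [Finset.mem_inter, Finset.mem_insert, Finset.mem_singleton]
      constructor
      · rintro ⟨rfl | rfl | rfl, hw⟩
        · rfl
        · exact absurd hw (by simpa using hβ)
        · exact absurd hw (by simpa using hγ)
      · rintro rfl
        exact ⟨Or.inl rfl, by simpa using hα⟩
    rw [← h, hi] at h2
    simp at h2

lemma abc_ne {a b c x y z : V} {e : Finset V}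
    (hb : e = ({x, y, z} : Finset V) ∨ (e ∩ ({a, b, c} : Finset V)).card = 2)
    (h3 : ({a, b, c} : Finset V).card = 3)
    (hax : a ∉ ({x, y, z} : Finset V)) :
    ({a, b, c} : Finset V) ≠ e := by
  rcases hb with rfl | h2
  · exact ne_of_mem_notMem' (Finset.mem_insert_self _ _) hax
  · intro h
    rw [← h, Finset.inter_self, h3] at h2
    omega

lemma buildF33 (G : Finset (Finset V)) (e₁ e₂ : Finset V)
    (hG : ∀ e : Finset V, e.card = 3 → e ≠ e₁ → e ≠ e₂ → e ∈ G)
    (a b c x y z : V)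
    (hab : a ≠ b) (hac : a ≠ c) (hax : a ≠ x) (hay : a ≠ y) (haz : a ≠ z)
    (hbc : b ≠ c) (hbx : b ≠ x) (hby : b ≠ y) (hbz : b ≠ z)
    (hcx : c ≠ x) (hcy : c ≠ y) (hcz : c ≠ z)
    (hxy : x ≠ y) (hxz : x ≠ z) (hyz : y ≠ z)
    (hb1 : e₁ = ({x, y, z} : Finset V) ∨ (e₁ ∩ ({a, b, c} : Finset V)).card = 2)
    (hb2 : e₂ = ({x, y, z} : Finset V) ∨ (e₂ ∩ ({a, b, c} : Finset V)).card = 2) :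
    HasF33 G := by
  have hba := hab.symm; have hca := hac.symm; have hxa := hax.symm
  have hya := hay.symm; have hza := haz.symm; have hcb := hbc.symm
  have hxb := hbx.symm; have hyb := hby.symm; have hzb := hbz.symm
  have hxc := hcx.symm; have hyc := hcy.symm; have hzc := hcz.symm
  have hyx := hxy.symm; have hzx := hxz.symm; have hzy := hyz.symm
  have h3abc : ({a, b, c} : Finset V).card = 3 := by
    rw [Finset.card_insert_of_notMem (by simp [*]),
      Finset.card_insert_of_notMem (by simp [*]), Finset.card_singleton]
  refine ⟨a, b, c, x, y, z, ?_, ?_, ?_, ?_, ?_, ?_, ?_, ?_, ?_, ?_, ?_⟩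
  · rw [Finset.card_insert_of_notMem (by simp [*]),
      Finset.card_insert_of_notMem (by simp [*]),
      Finset.card_insert_of_notMem (by simp [*]),
      Finset.card_insert_of_notMem (by simp [*]),
      Finset.card_insert_of_notMem (by simp [*]), Finset.card_singleton]
  all_goals refine hG _ ?_ ?_ ?_
  all_goals first
    | exact h3abc
    | (rw [Finset.card_insert_of_notMem (by simp [*]),
        Finset.card_insert_of_notMem (by simp [*]), Finset.card_singleton])
    | exact abc_ne hb1 h3abc (by simp [*])
    | exact abc_ne hb2 h3abc (by simp [*])
    | exact mixed_ne hb1 (by simp) (by simp [*]) (by simp [*]) (by simp [*])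
    | exact mixed_ne hb2 (by simp) (by simp [*]) (by simp [*]) (by simp [*])

end F33Aux

lemma F33key {V : Type*} [Fintype V] [DecidableEq V] (hV : Fintype.card V = 6)
    (G : Finset (Finset V)) (e₁ e₂ : Finset V) (h1 : e₁.card = 3) (h2 : e₂.card = 3)
    (hne : (e₁ ∩ e₂).Nonempty)
    (hG : ∀ e : Finset V, e.card = 3 → e ≠ e₁ → e ≠ e₂ → e ∈ G) : HasF33 G := by
  have hc1 : 1 ≤ (e₁ ∩ e₂).card := Finset.card_pos.2 hne
  have hc3 : (e₁ ∩ e₂).card ≤ 3 := h1 ▸ Finset.card_le_card Finset.inter_subset_left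
  rcases (by omega : (e₁ ∩ e₂).card = 1 ∨ (e₁ ∩ e₂).card = 2 ∨ (e₁ ∩ e₂).card = 3) with hc | hc | hc
  · -- share exactly one vertex
    obtain ⟨v, hv⟩ := Finset.card_eq_one.mp hc
    have hsub1 : ({v} : Finset V) ⊆ e₁ := hv ▸ Finset.inter_subset_left
    have hsub2 : ({v} : Finset V) ⊆ e₂ := hv ▸ Finset.inter_subset_right
    have hd1 : (e₁ \ {v}).card = 2 := by
      rw [Finset.card_sdiff_of_subset hsub1, h1, Finset.card_singleton]
    have hd2 : (e₂ \ {v}).card = 2 := by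
      rw [Finset.card_sdiff_of_subset hsub2, h2, Finset.card_singleton]
    obtain ⟨p, q, hpq, hpq'⟩ := Finset.card_eq_two.mp hd1
    obtain ⟨r, s, hrs, hrs'⟩ := Finset.card_eq_two.mp hd2
    have hp : p ∈ e₁ ∧ p ∉ ({v} : Finset V) :=
      Finset.mem_sdiff.mp (hpq' ▸ Finset.mem_insert_self p {q})
    have hq : q ∈ e₁ ∧ q ∉ ({v} : Finset V) :=
      Finset.mem_sdiff.mp (hpq' ▸ by simp)
    have hr : r ∈ e₂ ∧ r ∉ ({v} : Finset V) :=
      Finset.mem_sdiff.mp (hrs' ▸ Finset.mem_insert_self r {s})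
    have hs : s ∈ e₂ ∧ s ∉ ({v} : Finset V) :=
      Finset.mem_sdiff.mp (hrs' ▸ by simp)
    have hpv : p ≠ v := by simpa using hp.2
    have hqv : q ≠ v := by simpa using hq.2
    have hrv : r ≠ v := by simpa using hr.2
    have hsv : s ≠ v := by simpa using hs.2
    have hcross : ∀ w : V, w ∈ e₁ → w ∈ e₂ → w = v := by
      intro w hw1 hw2
      have : w ∈ e₁ ∩ e₂ := Finset.mem_inter.mpr ⟨hw1, hw2⟩
      simpa [hv] using this
    have hpr : p ≠ r := fun h => hpv (hcross p hp.1 (h ▸ hr.1))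
    have hps : p ≠ s := fun h => hpv (hcross p hp.1 (h ▸ hs.1))
    have hqr : q ≠ r := fun h => hqv (hcross q hq.1 (h ▸ hr.1))
    have hqs : q ≠ s := fun h => hqv (hcross q hq.1 (h ▸ hs.1))
    have he₁ : e₁ = {v, p, q} := by
      rw [← Finset.union_sdiff_of_subset hsub1, hpq']
      ext o; simp; tauto
    have he₂ : e₂ = {v, r, s} := by
      rw [← Finset.union_sdiff_of_subset hsub2, hrs']
      ext o; simp; tauto
    have hu5 : ({v, p, q, r, s} : Finset V).card = 5 := by
      rw [Finset.card_insert_of_notMem (by simp [Ne.symm hpv, Ne.symm hqv, Ne.symm hrv, Ne.symm hsv]),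
        Finset.card_insert_of_notMem (by simp [hpq, hpr, hps]),
        Finset.card_insert_of_notMem (by simp [hqr, hqs]),
        Finset.card_pair hrs]
    have huc : (({v, p, q, r, s} : Finset V)ᶜ).card = 1 := by
      rw [Finset.card_compl, hu5, hV]
    obtain ⟨t, ht⟩ := Finset.card_eq_one.mp huc
    have htmem : t ∉ ({v, p, q, r, s} : Finset V) := by
      rw [← Finset.mem_compl, ht]; simp
    simp only [Finset.mem_insert, Finset.mem_singleton, not_or] at htmem
    obtain ⟨htv, htp, htq, htr, hts⟩ := htmem
    -- witnesses : a b c x y z := r s t v p q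
    refine buildF33 G e₁ e₂ hG r s t v p q hrs (Ne.symm htr) hrv hpr.symm hqr.symm
      (Ne.symm hts) hsv hps.symm hqs.symm htv htp htq
      (Ne.symm hpv) (Ne.symm hqv) hpq (Or.inl he₁) (Or.inr ?_)
    rw [he₂, Finset.insert_inter_of_notMem
        (by simp [Ne.symm hrv, Ne.symm hsv, Ne.symm htv]),
      Finset.inter_eq_left.mpr (by
        intro o ho
        simp only [Finset.mem_insert, Finset.mem_singleton] at ho ⊢
        tauto),
      Finset.card_pair hrs]
  · -- share exactly two vertices
    obtain ⟨v, w, hvw, hvw'⟩ := Finset.card_eq_two.mp hc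
    have hsub1 : ({v, w} : Finset V) ⊆ e₁ := hvw' ▸ Finset.inter_subset_left
    have hsub2 : ({v, w} : Finset V) ⊆ e₂ := hvw' ▸ Finset.inter_subset_right
    have hd1 : (e₁ \ {v, w}).card = 1 := by
      rw [Finset.card_sdiff_of_subset hsub1, h1, Finset.card_pair hvw]
    have hd2 : (e₂ \ {v, w}).card = 1 := by
      rw [Finset.card_sdiff_of_subset hsub2, h2, Finset.card_pair hvw]
    obtain ⟨p, hp'⟩ := Finset.card_eq_one.mp hd1
    obtain ⟨q, hq'⟩ := Finset.card_eq_one.mp hd2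
    have hp : p ∈ e₁ ∧ p ∉ ({v, w} : Finset V) :=
      Finset.mem_sdiff.mp (hp' ▸ Finset.mem_singleton_self p)
    have hq : q ∈ e₂ ∧ q ∉ ({v, w} : Finset V) :=
      Finset.mem_sdiff.mp (hq' ▸ Finset.mem_singleton_self q)
    have hpv : p ≠ v := by have := hp.2; simp at this; exact this.1
    have hpw : p ≠ w := by have := hp.2; simp at this; exact this.2
    have hqv : q ≠ v := by have := hq.2; simp at this; exact this.1
    have hqw : q ≠ w := by have := hq.2; simp at this; exact this.2
    have hpq : p ≠ q := by
      intro h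
      have : p ∈ e₁ ∩ e₂ := Finset.mem_inter.mpr ⟨hp.1, h ▸ hq.1⟩
      rw [hvw'] at this
      simp [hpv, hpw] at this
    have he₁ : e₁ = {v, w, p} := by
      rw [← Finset.union_sdiff_of_subset hsub1, hp']
      ext o; simp
    have he₂ : e₂ = {v, w, q} := by
      rw [← Finset.union_sdiff_of_subset hsub2, hq']
      ext o; simp
    have hu4 : ({v, w, p, q} : Finset V).card = 4 := by
      rw [Finset.card_insert_of_notMem (by simp [hvw, Ne.symm hpv, Ne.symm hqv]),
        Finset.card_insert_of_notMem (by simp [Ne.symm hpw, Ne.symm hqw]),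
        Finset.card_pair hpq]
    have huc : (({v, w, p, q} : Finset V)ᶜ).card = 2 := by
      rw [Finset.card_compl, hu4, hV]
    obtain ⟨c0, d, hcd, hcd'⟩ := Finset.card_eq_two.mp huc
    have hc0 : c0 ∉ ({v, w, p, q} : Finset V) := by
      rw [← Finset.mem_compl, hcd']; simp
    have hd : d ∉ ({v, w, p, q} : Finset V) := by
      rw [← Finset.mem_compl, hcd']; simp
    simp only [Finset.mem_insert, Finset.mem_singleton, not_or] at hc0 hd
    obtain ⟨hcv, hcw, hcp, hcq⟩ := hc0
    obtain ⟨hdv, hdw, hdp, hdq⟩ := hd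
    -- witnesses : a b c x y z := v w c0 p q d
    refine buildF33 G e₁ e₂ hG v w c0 p q d hvw (Ne.symm hcv) (Ne.symm hpv) (Ne.symm hqv)
      (Ne.symm hdv) (Ne.symm hcw) (Ne.symm hpw) (Ne.symm hqw) (Ne.symm hdw)
      hcp hcq hcd hpq (Ne.symm hdp) (Ne.symm hdq)
      (Or.inr ?_) (Or.inr ?_)
    · rw [he₁, Finset.insert_inter_of_mem (by simp),
        Finset.insert_inter_of_mem (by simp),
        Finset.singleton_inter_of_notMem (by simp [hpv, hpw, Ne.symm hcp]),
        Finset.insert_empty, Finset.card_pair hvw]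
    · rw [he₂, Finset.insert_inter_of_mem (by simp),
        Finset.insert_inter_of_mem (by simp),
        Finset.singleton_inter_of_notMem (by simp [hqv, hqw, Ne.symm hcq]),
        Finset.insert_empty, Finset.card_pair hvw]
  · -- e₁ = e₂
    have h12 : e₁ = e₂ := by
      have ha : e₁ ∩ e₂ = e₁ :=
        Finset.eq_of_subset_of_card_le Finset.inter_subset_left (by omega)
      have hb : e₁ ∩ e₂ = e₂ :=
        Finset.eq_of_subset_of_card_le Finset.inter_subset_right (by omega)
      rw [← ha, hb]
    obtain ⟨x, y, z, hxy, hxz, hyz, hexyz⟩ := Finset.card_eq_three.mp h1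
    have hcc : (e₁ᶜ).card = 3 := by rw [Finset.card_compl, h1, hV]
    obtain ⟨a, b, c, hab, hac, hbc, hcabc⟩ := Finset.card_eq_three.mp hcc
    have hcross : ∀ u : V, u ∈ ({a, b, c} : Finset V) → u ∉ e₁ := by
      intro u hu
      rw [← hcabc] at hu
      exact Finset.mem_compl.mp hu
    have hax' : a ∉ e₁ := hcross a (by simp)
    have hbx' : b ∉ e₁ := hcross b (by simp)
    have hcx' : c ∉ e₁ := hcross c (by simp)
    rw [hexyz] at hax' hbx' hcx'
    simp only [Finset.mem_insert, Finset.mem_singleton, not_or] at hax' hbx' hcx'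
    refine buildF33 G e₁ e₂ hG a b c x y z hab hac hax'.1 hax'.2.1 hax'.2.2
      hbc hbx'.1 hbx'.2.1 hbx'.2.2 hcx'.1 hcx'.2.1 hcx'.2.2 hxy hxz hyz
      (Or.inl hexyz) (Or.inl (h12 ▸ hexyz))

/-- A 3-graph on 6 vertices containing all triples except at most two, where two
missing triples must share a vertex, contains a copy of `F₃,₃`. -/
theorem K6_minus_two_intersecting_hasF33 {V : Type*} [Fintype V] [DecidableEq V]
    (hV : Fintype.card V = 6) (G : Finset (Finset V))
    (h3 : ∀ e ∈ G, e.card = 3)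
    (hmiss : (Finset.univ.powersetCard 3 \ G).card ≤ 2)
    (hshare : ∀ e₁ ∈ Finset.univ.powersetCard 3 \ G,
      ∀ e₂ ∈ Finset.univ.powersetCard 3 \ G, e₁ ≠ e₂ → (e₁ ∩ e₂).Nonempty) :
    HasF33 G := by
  classical
  have hmem : ∀ e : Finset V, e.card = 3 → e ∉ Finset.univ.powersetCard 3 \ G → e ∈ G := by
    intro e he h
    by_contra hg
    exact h (Finset.mem_sdiff.mpr
      ⟨Finset.mem_powersetCard.mpr ⟨Finset.subset_univ e, he⟩, hg⟩)
  have hcard3 : ∀ e ∈ Finset.univ.powersetCard 3 \ G, e.card = 3 := by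
    intro e he
    exact (Finset.mem_powersetCard.mp (Finset.mem_sdiff.mp he).1).2
  have hex : ∃ e₁ e₂ : Finset V, e₁.card = 3 ∧ e₂.card = 3 ∧ (e₁ ∩ e₂).Nonempty ∧
      Finset.univ.powersetCard 3 \ G ⊆ {e₁, e₂} := by
    rcases (by omega : (Finset.univ.powersetCard 3 \ G).card = 0 ∨
        (Finset.univ.powersetCard 3 \ G).card = 1 ∨
        (Finset.univ.powersetCard 3 \ G).card = 2) with h0 | h01 | h02
    · obtain ⟨t, -, ht⟩ := Finset.exists_subset_card_eq
        (show 3 ≤ (Finset.univ : Finset V).card by rw [Finset.card_univ, hV]; omega)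
      refine ⟨t, t, ht, ht, ?_, ?_⟩
      · rw [Finset.inter_self]
        exact Finset.card_pos.mp (by omega)
      · rw [Finset.card_eq_zero.mp h0]
        exact Finset.empty_subset _
    · obtain ⟨e, he⟩ := Finset.card_eq_one.mp h01
      have heS : e ∈ Finset.univ.powersetCard 3 \ G := he ▸ Finset.mem_singleton_self e
      have h3e := hcard3 e heS
      refine ⟨e, e, h3e, h3e, ?_, ?_⟩
      · rw [Finset.inter_self]
        exact Finset.card_pos.mp (by omega)
      · rw [he]; intro o ho; simp at ho ⊢; tauto
    · obtain ⟨e, f, hef, hef'⟩ := Finset.card_eq_two.mp h02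
      have heS : e ∈ Finset.univ.powersetCard 3 \ G := by rw [hef']; simp
      have hfS : f ∈ Finset.univ.powersetCard 3 \ G := by rw [hef']; simp
      exact ⟨e, f, hcard3 e heS, hcard3 f hfS, hshare e heS f hfS hef, hef' ▸ le_refl _⟩
  obtain ⟨e₁, e₂, hc1, hc2, hne, hsub⟩ := hex
  refine F33key hV G e₁ e₂ hc1 hc2 hne ?_
  intro e he hne1 hne2
  refine hmem e he fun hS => ?_
  have := hsub hS
  simp only [Finset.mem_insert, Finset.mem_singleton] at this
  tauto
end

section
/- Let G be an F_{3,3}-free 3-graph and let a,b,c,d be four distinct vertices such that all four triples among them are edges of G. For distinct vertices p,q outside {a,b,c,d} define w(pq) as the number of v ∈ {a,b,c,d} with {v,p,q} an edge of G. Then for every three distinct vertices x,y,z outside {a,b,c,d}, w(xy) + w(xz) + w(yz) ≤ 10. -/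
def F33Free {V : Type*} [DecidableEq V] (G : Finset (Finset V)) : Prop := ¬ HasF33 G

/-- `w p q`: the multiplicity of the pair `pq` in the link multigraph of
`{a,b,c,d}`, i.e. the number of `v ∈ {a,b,c,d}` with `{v,p,q} ∈ G`. -/
def linkWeight {V : Type*} [DecidableEq V] (G : Finset (Finset V)) (a b c d : V)
    (p q : V) : ℕ :=
  (({a, b, c, d} : Finset V).filter (fun v => ({v, p, q} : Finset V) ∈ G)).card

/-- In the link multigraph of a `K⁴₃` in an `F₃,₃`-free 3-graph, every triple of
distinct vertices outside `{a,b,c,d}` has total multiplicity at most 10. -/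
theorem link_triple_le_ten {V : Type*} [DecidableEq V] (G : Finset (Finset V))
    (hfree : F33Free G) (a b c d : V) (habcd : ({a, b, c, d} : Finset V).card = 4)
    (hab : ({a, b, c} : Finset V) ∈ G) (habd : ({a, b, d} : Finset V) ∈ G)
    (hacd : ({a, c, d} : Finset V) ∈ G) (hbcd : ({b, c, d} : Finset V) ∈ G)
    (x y z : V) (hx : x ∉ ({a, b, c, d} : Finset V)) (hy : y ∉ ({a, b, c, d} : Finset V))
    (hz : z ∉ ({a, b, c, d} : Finset V)) (hxy : x ≠ y) (hxz : x ≠ z) (hyz : y ≠ z) :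
    linkWeight G a b c d x y + linkWeight G a b c d x z + linkWeight G a b c d y z ≤ 10 := by
  classical
  have hsub3 : ∀ u v w : V, ({u, v, w} : Finset V).card ≤ 3 :=
    fun u v w => (Finset.card_insert_le _ _).trans (Nat.succ_le_succ
      ((Finset.card_insert_le _ _).trans (by simp)))
  -- distinctness of a b c d
  have hne : ∀ u v w : V, ({a, b, c, d} : Finset V) ⊆ {u, v, w} → False := by
    intro u v w hsub
    have h1 := Finset.card_le_card hsub
    have h2 := hsub3 u v w
    omega
  have hab' : a ≠ b := by intro h; subst h; exact hne a c d (by intro t ht; simp at ht ⊢; tauto)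
  have hac' : a ≠ c := by intro h; subst h; exact hne a b d (by intro t ht; simp at ht ⊢; tauto)
  have had' : a ≠ d := by intro h; subst h; exact hne a b c (by intro t ht; simp at ht ⊢; tauto)
  have hbc' : b ≠ c := by intro h; subst h; exact hne a b d (by intro t ht; simp at ht ⊢; tauto)
  have hbd' : b ≠ d := by intro h; subst h; exact hne a b c (by intro t ht; simp at ht ⊢; tauto)
  have hcd' : c ≠ d := by intro h; subst h; exact hne a b c (by intro t ht; simp at ht ⊢; tauto)
  simp only [Finset.mem_insert, Finset.mem_singleton, not_or] at hx hy hz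
  obtain ⟨hxa, hxb, hxc, hxd⟩ := hx
  obtain ⟨hya, hyb, hyc, hyd⟩ := hy
  obtain ⟨hza, hzb, hzc, hzd⟩ := hz
  -- expand linkWeight
  have hw : ∀ p q : V, linkWeight G a b c d p q =
      (if ({a, p, q} : Finset V) ∈ G then 1 else 0) +
      ((if ({b, p, q} : Finset V) ∈ G then 1 else 0) +
      ((if ({c, p, q} : Finset V) ∈ G then 1 else 0) +
      (if ({d, p, q} : Finset V) ∈ G then 1 else 0))) := by
    intro p q
    unfold linkWeight
    rw [Finset.card_filter]
    rw [Finset.sum_insert (by simp [hab', hac', had'])]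
    rw [Finset.sum_insert (by simp [hbc', hbd'])]
    rw [Finset.sum_insert (by simp [hcd'])]
    rw [Finset.sum_singleton]
  have card6 : ∀ u v w : V, u ≠ x → u ≠ y → u ≠ z → v ≠ x → v ≠ y → v ≠ z →
      w ≠ x → w ≠ y → w ≠ z → u ≠ v → u ≠ w → v ≠ w →
      ({u, v, w, x, y, z} : Finset V).card = 6 := by
    intro u v w h1 h2 h3 h4 h5 h6 h7 h8 h9 h10 h11 h12
    rw [Finset.card_insert_of_notMem (by simp [h1, h2, h3, h10, h11]),
        Finset.card_insert_of_notMem (by simp [h4, h5, h6, h12]),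
        Finset.card_insert_of_notMem (by simp [h7, h8, h9]),
        Finset.card_insert_of_notMem (by simp [hxy, hxz]),
        Finset.card_insert_of_notMem (by simp [hyz]),
        Finset.card_singleton]
  have toMem : ∀ (s : Finset V) (e : ℕ), (e = if s ∈ G then 1 else 0) → e = 1 → s ∈ G := by
    intro s e he h1
    by_contra hm
    rw [if_neg hm] at he
    omega
  by_contra hcon
  push_neg at hcon
  rw [hw x y, hw x z, hw y z] at hcon
  set e1 := (if ({a, x, y} : Finset V) ∈ G then 1 else 0) with he1
  set e2 := (if ({a, x, z} : Finset V) ∈ G then 1 else 0) with he2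
  set e3 := (if ({a, y, z} : Finset V) ∈ G then 1 else 0) with he3
  set e4 := (if ({b, x, y} : Finset V) ∈ G then 1 else 0) with he4
  set e5 := (if ({b, x, z} : Finset V) ∈ G then 1 else 0) with he5
  set e6 := (if ({b, y, z} : Finset V) ∈ G then 1 else 0) with he6
  set e7 := (if ({c, x, y} : Finset V) ∈ G then 1 else 0) with he7
  set e8 := (if ({c, x, z} : Finset V) ∈ G then 1 else 0) with he8
  set e9 := (if ({c, y, z} : Finset V) ∈ G then 1 else 0) with he9
  set e10 := (if ({d, x, y} : Finset V) ∈ G then 1 else 0) with he10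
  set e11 := (if ({d, x, z} : Finset V) ∈ G then 1 else 0) with he11
  set e12 := (if ({d, y, z} : Finset V) ∈ G then 1 else 0) with he12
  have b1 : e1 ≤ 1 := by rw [he1]; split <;> omega
  have b2 : e2 ≤ 1 := by rw [he2]; split <;> omega
  have b3 : e3 ≤ 1 := by rw [he3]; split <;> omega
  have b4 : e4 ≤ 1 := by rw [he4]; split <;> omega
  have b5 : e5 ≤ 1 := by rw [he5]; split <;> omega
  have b6 : e6 ≤ 1 := by rw [he6]; split <;> omega
  have b7 : e7 ≤ 1 := by rw [he7]; split <;> omega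
  have b8 : e8 ≤ 1 := by rw [he8]; split <;> omega
  have b9 : e9 ≤ 1 := by rw [he9]; split <;> omega
  have b10 : e10 ≤ 1 := by rw [he10]; split <;> omega
  have b11 : e11 ≤ 1 := by rw [he11]; split <;> omega
  have b12 : e12 ≤ 1 := by rw [he12]; split <;> omega
  have main : (e1 = 1 ∧ e2 = 1 ∧ e3 = 1 ∧ e4 = 1 ∧ e5 = 1 ∧ e6 = 1 ∧ e7 = 1 ∧ e8 = 1 ∧ e9 = 1)
      ∨ (e1 = 1 ∧ e2 = 1 ∧ e3 = 1 ∧ e4 = 1 ∧ e5 = 1 ∧ e6 = 1 ∧ e10 = 1 ∧ e11 = 1 ∧ e12 = 1)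
      ∨ (e1 = 1 ∧ e2 = 1 ∧ e3 = 1 ∧ e7 = 1 ∧ e8 = 1 ∧ e9 = 1 ∧ e10 = 1 ∧ e11 = 1 ∧ e12 = 1)
      ∨ (e4 = 1 ∧ e5 = 1 ∧ e6 = 1 ∧ e7 = 1 ∧ e8 = 1 ∧ e9 = 1 ∧ e10 = 1 ∧ e11 = 1 ∧ e12 = 1) := by
    omega
  rcases main with ⟨m1, m2, m3, m4, m5, m6, m7, m8, m9⟩ | ⟨m1, m2, m3, m4, m5, m6, m7, m8, m9⟩ |
    ⟨m1, m2, m3, m4, m5, m6, m7, m8, m9⟩ | ⟨m1, m2, m3, m4, m5, m6, m7, m8, m9⟩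
  · exact hfree ⟨a, b, c, x, y, z,
      card6 a b c (Ne.symm hxa) (Ne.symm hya) (Ne.symm hza) (Ne.symm hxb) (Ne.symm hyb) (Ne.symm hzb) (Ne.symm hxc) (Ne.symm hyc) (Ne.symm hzc)
        hab' hac' hbc', hab,
      toMem _ _ he1 m1, toMem _ _ he2 m2, toMem _ _ he3 m3,
      toMem _ _ he4 m4, toMem _ _ he5 m5, toMem _ _ he6 m6,
      toMem _ _ he7 m7, toMem _ _ he8 m8, toMem _ _ he9 m9⟩
  · exact hfree ⟨a, b, d, x, y, z,
      card6 a b d (Ne.symm hxa) (Ne.symm hya) (Ne.symm hza) (Ne.symm hxb) (Ne.symm hyb) (Ne.symm hzb) (Ne.symm hxd) (Ne.symm hyd) (Ne.symm hzd)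
        hab' had' hbd', habd,
      toMem _ _ he1 m1, toMem _ _ he2 m2, toMem _ _ he3 m3,
      toMem _ _ he4 m4, toMem _ _ he5 m5, toMem _ _ he6 m6,
      toMem _ _ he10 m7, toMem _ _ he11 m8, toMem _ _ he12 m9⟩
  · exact hfree ⟨a, c, d, x, y, z,
      card6 a c d (Ne.symm hxa) (Ne.symm hya) (Ne.symm hza) (Ne.symm hxc) (Ne.symm hyc) (Ne.symm hzc) (Ne.symm hxd) (Ne.symm hyd) (Ne.symm hzd)
        hac' had' hcd', hacd,
      toMem _ _ he1 m1, toMem _ _ he2 m2, toMem _ _ he3 m3,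
      toMem _ _ he7 m4, toMem _ _ he8 m5, toMem _ _ he9 m6,
      toMem _ _ he10 m7, toMem _ _ he11 m8, toMem _ _ he12 m9⟩
  · exact hfree ⟨b, c, d, x, y, z,
      card6 b c d (Ne.symm hxb) (Ne.symm hyb) (Ne.symm hzb) (Ne.symm hxc) (Ne.symm hyc) (Ne.symm hzc) (Ne.symm hxd) (Ne.symm hyd) (Ne.symm hzd)
        hbc' hbd' hcd', hbcd,
      toMem _ _ he4 m1, toMem _ _ he5 m2, toMem _ _ he6 m3,
      toMem _ _ he7 m4, toMem _ _ he8 m5, toMem _ _ he9 m6,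
      toMem _ _ he10 m7, toMem _ _ he11 m8, toMem _ _ he12 m9⟩
end

section
/- Let G be an F_{3,3}-free 3-graph on n vertices and let a,b,c,d be four distinct vertices such that all four triples among them are edges of G. Then the number of edges of G containing exactly one vertex of {a,b,c,d} is at most m(n−4). -/
section Aux
variable {V : Type*} [DecidableEq V]

def apexPairs (W : Finset V) (H : Finset (Finset V)) : Finset (Finset V) :=
  (W.powersetCard 2).filter (fun P => ∃ x ∈ W, x ∉ P ∧ ∀ y ∈ P, ({x, y} : Finset V) ∈ H)

lemma mem_apexPairs {W : Finset V} {H : Finset (Finset V)} {P : Finset V} :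
    P ∈ apexPairs W H ↔ P ∈ W.powersetCard 2 ∧
      ∃ x ∈ W, x ∉ P ∧ ∀ y ∈ P, ({x, y} : Finset V) ∈ H := by
  unfold apexPairs
  exact Finset.mem_filter

lemma apexPairs_subset (W : Finset V) (H : Finset (Finset V)) :
    apexPairs W H ⊆ W.powersetCard 2 := Finset.filter_subset _ _

lemma step_mem (W : Finset V) (H : Finset (Finset V)) (hsub : H ⊆ W.powersetCard 2)
    {x y : V} (hx : x ∈ W) (hxy : x ≠ y) (hP : ({x, y} : Finset V) ∈ H)
    {Q : Finset V} (hQ : Q ∈ H) (hxQ : x ∈ Q) (hne : Q ≠ ({x, y} : Finset V)) :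
    insert y (Q.erase x) ∈ apexPairs W H ∧ y ∈ insert y (Q.erase x) ∧
      x ∉ insert y (Q.erase x) := by
  have hQW := Finset.mem_powersetCard.mp (hsub hQ)
  have hcard : (Q.erase x).card = 1 := by
    rw [Finset.card_erase_of_mem hxQ, hQW.2]
  obtain ⟨a, ha⟩ := Finset.card_eq_one.mp hcard
  have haQ : a ∈ Q.erase x := by rw [ha]; simp
  have hax : a ≠ x := Finset.ne_of_mem_erase haQ
  have haW : a ∈ W := hQW.1 (Finset.mem_of_mem_erase haQ)
  have hQeq : Q = insert x {a} := by
    rw [← ha, Finset.insert_erase hxQ]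
  have hay : a ≠ y := by
    intro h; exact hne (by rw [hQeq, h])
  have hyW : y ∈ W := (Finset.mem_powersetCard.mp (hsub hP)).1 (by simp)
  refine ⟨?_, by simp, ?_⟩
  · rw [ha]
    refine Finset.mem_filter.mpr ⟨?_, ?_⟩
    · rw [Finset.mem_powersetCard]
      constructor
      · intro z hz
        rcases Finset.mem_insert.mp hz with rfl | hz
        · exact hyW
        · rw [Finset.mem_singleton] at hz; subst hz; exact haW
      · rw [Finset.card_insert_of_notMem (by simp [Ne.symm hay]), Finset.card_singleton]
    · refine ⟨x, hx, ?_, ?_⟩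
      · simp [hxy, Ne.symm hax]
      · intro u hu
        rcases Finset.mem_insert.mp hu with rfl | hu
        · exact hP
        · rw [Finset.mem_singleton] at hu; subst hu
          rwa [← hQeq]
  · rw [ha]
    simp [hxy, Ne.symm hax]

lemma graph_lemma : ∀ (k : ℕ) (W : Finset V) (H : Finset (Finset V)), W.card ≤ k →
    H ⊆ W.powersetCard 2 → H.card ≤ (apexPairs W H).card + W.card / 2 := by
  intro k
  induction k with
  | zero =>
    intro W H hk hsub
    have hW : W = ∅ := Finset.card_eq_zero.mp (Nat.le_zero.mp hk)
    subst hW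
    have : H ⊆ ∅ := by
      intro Q hQ
      have := Finset.mem_powersetCard.mp (hsub hQ)
      have h1 : Q = ∅ := Finset.subset_empty.mp this.1
      rw [h1] at this
      simp at this
    simp [Finset.subset_empty.mp this]
  | succ k ih =>
    intro W H hk hsub
    rcases H.eq_empty_or_nonempty with rfl | ⟨P₀, hP₀⟩
    · simp
    have hP₀W := Finset.mem_powersetCard.mp (hsub hP₀)
    obtain ⟨x, y, hxy, rfl⟩ := Finset.card_eq_two.mp hP₀W.2
    have hxW : x ∈ W := hP₀W.1 (by simp)
    have hyW : y ∈ W := hP₀W.1 (by simp)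
    have hWcard : 2 ≤ W.card := by
      calc 2 = ({x, y} : Finset V).card := hP₀W.2.symm
      _ ≤ W.card := Finset.card_le_card hP₀W.1
    set W' := W \ {x, y} with hW'def
    set H' := H.filter (fun Q => Q ⊆ W') with hH'def
    have hsub' : H' ⊆ W'.powersetCard 2 := by
      intro Q hQ
      rw [hH'def, Finset.mem_filter] at hQ
      exact Finset.mem_powersetCard.mpr ⟨hQ.2, (Finset.mem_powersetCard.mp (hsub hQ.1)).2⟩
    have hW'card : W'.card = W.card - 2 := by
      rw [hW'def, Finset.card_sdiff_of_subset hP₀W.1, hP₀W.2]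
    have hIH := ih W' H' (by omega) hsub'
    set Hx := H.filter (fun Q => x ∈ Q) with hHx
    set Hy := H.filter (fun Q => y ∈ Q) with hHy
    -- step (1): H.card + 1 ≤ H'.card + Hx.card + Hy.card
    have hHunion : H ⊆ H' ∪ (Hx ∪ Hy) := by
      intro Q hQ
      by_cases hxQ : x ∈ Q
      · exact Finset.mem_union_right _ (Finset.mem_union_left _ (Finset.mem_filter.mpr ⟨hQ, hxQ⟩))
      by_cases hyQ : y ∈ Q
      · exact Finset.mem_union_right _ (Finset.mem_union_right _ (Finset.mem_filter.mpr ⟨hQ, hyQ⟩))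
      refine Finset.mem_union_left _ (Finset.mem_filter.mpr ⟨hQ, ?_⟩)
      intro z hz
      rw [hW'def, Finset.mem_sdiff]
      refine ⟨(Finset.mem_powersetCard.mp (hsub hQ)).1 hz, ?_⟩
      intro hzxy
      rcases Finset.mem_insert.mp hzxy with rfl | hzy
      · exact hxQ hz
      · rw [Finset.mem_singleton] at hzy; subst hzy; exact hyQ hz
    have hinterxy : Hx ∩ Hy = {({x, y} : Finset V)} := by
      ext Q
      simp only [Finset.mem_inter, Finset.mem_singleton, hHx, hHy, Finset.mem_filter]
      constructor
      · rintro ⟨⟨hQ, hxQ⟩, ⟨_, hyQ⟩⟩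
        have hsubQ : ({x, y} : Finset V) ⊆ Q := by
          intro z hz
          rcases Finset.mem_insert.mp hz with rfl | hz
          · exact hxQ
          · rw [Finset.mem_singleton] at hz; subst hz; exact hyQ
        exact (Finset.eq_of_subset_of_card_le hsubQ
          (by rw [(Finset.mem_powersetCard.mp (hsub hQ)).2, hP₀W.2])).symm
      · rintro rfl
        exact ⟨⟨hP₀, by simp⟩, ⟨hP₀, by simp⟩⟩
    have h1 : H.card + 1 ≤ H'.card + Hx.card + Hy.card := by
      have hcu : (Hx ∪ Hy).card + 1 = Hx.card + Hy.card := by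
        have := Finset.card_union_add_card_inter Hx Hy
        rw [hinterxy] at this
        simpa using this
      have := Finset.card_le_card hHunion
      have := Finset.card_union_le H' (Hx ∪ Hy)
      omega
    -- step (2)
    set D := apexPairs W H with hD
    set D' := apexPairs W' H' with hD'
    set A := (Hx.erase ({x, y} : Finset V)).image (fun Q => insert y (Q.erase x)) with hA
    set B := (Hy.erase ({x, y} : Finset V)).image (fun Q => insert x (Q.erase y)) with hB
    have hyx : ({y, x} : Finset V) = ({x, y} : Finset V) := Finset.pair_comm y x
    have hmemA : ∀ Q ∈ Hx.erase ({x, y} : Finset V),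
        insert y (Q.erase x) ∈ D ∧ y ∈ insert y (Q.erase x) ∧ x ∉ insert y (Q.erase x) := by
      intro Q hQ
      have h1 := Finset.mem_of_mem_erase hQ
      rw [hHx, Finset.mem_filter] at h1
      exact step_mem W H hsub hxW hxy hP₀ h1.1 h1.2 (Finset.ne_of_mem_erase hQ)
    have hmemB : ∀ Q ∈ Hy.erase ({x, y} : Finset V),
        insert x (Q.erase y) ∈ D ∧ x ∈ insert x (Q.erase y) ∧ y ∉ insert x (Q.erase y) := by
      intro Q hQ
      have h1 := Finset.mem_of_mem_erase hQ
      rw [hHy, Finset.mem_filter] at h1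
      have hne : Q ≠ ({y, x} : Finset V) := by rw [hyx]; exact Finset.ne_of_mem_erase hQ
      exact step_mem W H hsub hyW (Ne.symm hxy) (by rwa [hyx]) h1.1 h1.2 hne
    have hkey : ∀ (u v : V), u ≠ v → ∀ Q ∈ (H.filter (fun Q => u ∈ Q)).erase ({u, v} : Finset V),
        v ∉ Q.erase u := by
      intro u v huv Q hQ hv
      have h1 := Finset.mem_of_mem_erase hQ
      rw [Finset.mem_filter] at h1
      have hsubQ : ({u, v} : Finset V) ⊆ Q := by
        intro z hz
        rcases Finset.mem_insert.mp hz with rfl | hz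
        · exact h1.2
        · rw [Finset.mem_singleton] at hz; subst hz; exact Finset.mem_of_mem_erase hv
      have hc2 : ({u, v} : Finset V).card = 2 := by
        rw [Finset.card_insert_of_notMem (by simp [huv]), Finset.card_singleton]
      exact Finset.ne_of_mem_erase hQ (Finset.eq_of_subset_of_card_le hsubQ
          (by rw [(Finset.mem_powersetCard.mp (hsub h1.1)).2, hc2])).symm
    have hinj : ∀ (u v : V), u ≠ v →
        Set.InjOn (fun Q : Finset V => insert v (Q.erase u))
          (((H.filter (fun Q => u ∈ Q)).erase ({u, v} : Finset V) : Finset (Finset V)) : Set (Finset V)) := by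
      intro u v huv Q hQ Q' hQ' heq
      simp only at heq
      have e1 : Q.erase u = Q'.erase u := by
        have := congrArg (fun s => Finset.erase s v) heq
        simpa [Finset.erase_insert (hkey u v huv Q hQ), Finset.erase_insert (hkey u v huv Q' hQ')]
          using this
      have h1 := Finset.mem_filter.mp (Finset.mem_of_mem_erase hQ)
      have h1' := Finset.mem_filter.mp (Finset.mem_of_mem_erase hQ')
      rw [← Finset.insert_erase h1.2, e1, Finset.insert_erase h1'.2]
    have hcardA : A.card = Hx.card - 1 := by
      rw [hA, Finset.card_image_of_injOn (hinj x y hxy), Finset.card_erase_of_mem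
        (Finset.mem_filter.mpr ⟨hP₀, by simp⟩)]
    have hcardB : B.card = Hy.card - 1 := by
      rw [hB, ← hyx, Finset.card_image_of_injOn (hinj y x (Ne.symm hxy)),
        Finset.card_erase_of_mem (Finset.mem_filter.mpr ⟨by rw [hyx]; exact hP₀, by simp⟩)]
    have hD'sub : D' ⊆ D := by
      intro P hP
      rw [hD', apexPairs, Finset.mem_filter] at hP
      obtain ⟨hP1, z, hzW', hzP, hall⟩ := hP
      rw [Finset.mem_powersetCard] at hP1
      refine Finset.mem_filter.mpr ⟨Finset.mem_powersetCard.mpr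
        ⟨hP1.1.trans (Finset.sdiff_subset), hP1.2⟩, z, Finset.mem_sdiff.mp hzW' |>.1, hzP, ?_⟩
      intro u hu
      exact Finset.mem_filter.mp (hall u hu) |>.1
    have hD'x : ∀ P ∈ D', x ∉ P ∧ y ∉ P := by
      intro P hP
      rw [hD', apexPairs, Finset.mem_filter, Finset.mem_powersetCard] at hP
      constructor
      · intro hx; have := hP.1.1 hx; rw [hW'def, Finset.mem_sdiff] at this; exact this.2 (by simp)
      · intro hy; have := hP.1.1 hy; rw [hW'def, Finset.mem_sdiff] at this; exact this.2 (by simp)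
    have h2 : D'.card + A.card + B.card ≤ D.card := by
      have hdAB : Disjoint A B := by
        rw [Finset.disjoint_left]
        intro P hPA hPB
        rw [hA, Finset.mem_image] at hPA
        rw [hB, Finset.mem_image] at hPB
        obtain ⟨Q, hQ, rfl⟩ := hPA
        obtain ⟨Q', hQ', heq⟩ := hPB
        exact (hmemA Q hQ).2.2 (heq ▸ (hmemB Q' hQ').2.1)
      have hdD'A : Disjoint D' (A ∪ B) := by
        rw [Finset.disjoint_left]
        intro P hPD hPAB
        rcases Finset.mem_union.mp hPAB with hPA | hPB
        · rw [hA, Finset.mem_image] at hPA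
          obtain ⟨Q, hQ, rfl⟩ := hPA
          exact (hD'x _ hPD).2 (hmemA Q hQ).2.1
        · rw [hB, Finset.mem_image] at hPB
          obtain ⟨Q, hQ, rfl⟩ := hPB
          exact (hD'x _ hPD).1 (hmemB Q hQ).2.1
      have hsubD : D' ∪ (A ∪ B) ⊆ D := by
        intro P hP
        rcases Finset.mem_union.mp hP with hP | hP
        · exact hD'sub hP
        rcases Finset.mem_union.mp hP with hP | hP
        · rw [hA, Finset.mem_image] at hP
          obtain ⟨Q, hQ, rfl⟩ := hP
          exact (hmemA Q hQ).1
        · rw [hB, Finset.mem_image] at hP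
          obtain ⟨Q, hQ, rfl⟩ := hP
          exact (hmemB Q hQ).1
      calc D'.card + A.card + B.card
          = (D' ∪ (A ∪ B)).card := by
            rw [Finset.card_union_of_disjoint hdD'A, Finset.card_union_of_disjoint hdAB, add_assoc]
      _ ≤ D.card := Finset.card_le_card hsubD
    have hHx1 : 1 ≤ Hx.card := Finset.card_pos.mpr ⟨_, Finset.mem_filter.mpr ⟨hP₀, by simp⟩⟩
    have hHy1 : 1 ≤ Hy.card := Finset.card_pos.mpr ⟨_, Finset.mem_filter.mpr ⟨hP₀, by simp⟩⟩
    omega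

lemma m_eq (w : ℕ) : m w = 3 * (w * (w - 1) / 2) + w / 2 := by
  rw [m]
  rcases Nat.even_or_odd w with ⟨k, rfl⟩ | ⟨k, rfl⟩
  · rw [if_pos ⟨k, rfl⟩]
    have hX : k ≤ k * k := by nlinarith
    have h1 : (k + k) ^ 2 = 4 * (k * k) := by ring
    have h2 : (k + k) * ((k + k) - 1) = (k + k) * (k + k) - (k + k) := Nat.mul_pred ..
    have h3 : (k + k) * (k + k) = 4 * (k * k) := by ring
    omega
  · rw [if_neg (by simp [Nat.even_iff, Nat.add_mod, Nat.mul_mod])]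
    have h1 : (2 * k + 1) ^ 2 = 4 * (k * k) + 4 * k + 1 := by ring
    have h2 : (2 * k + 1) * ((2 * k + 1) - 1) = 4 * (k * k) + 2 * k := by
      have h : (2 * k + 1) - 1 = 2 * k := rfl
      rw [h]; ring
    omega

lemma card3_le (x y z : V) : ({x, y, z} : Finset V).card ≤ 3 := by
  refine le_trans (Finset.card_insert_le _ _) (Nat.succ_le_succ ?_)
  exact le_trans (Finset.card_insert_le _ _) (by simp)

lemma four_distinct {a b c d : V} (h : ({a, b, c, d} : Finset V).card = 4) :
    a ≠ b ∧ a ≠ c ∧ a ≠ d ∧ b ≠ c ∧ b ≠ d ∧ c ≠ d := by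
  refine ⟨?_, ?_, ?_, ?_, ?_, ?_⟩ <;> rintro rfl
  · rw [Finset.insert_idem] at h
    exact absurd h (by have := card3_le a c d; omega)
  · rw [Finset.insert_comm b a, Finset.insert_idem] at h
    exact absurd h (by have := card3_le a b d; omega)
  · rw [Finset.pair_comm c a, Finset.insert_comm b a, Finset.insert_idem] at h
    exact absurd h (by have := card3_le a b c; omega)
  · rw [Finset.insert_idem] at h
    exact absurd h (by have := card3_le a b d; omega)
  · rw [Finset.pair_comm c b, Finset.insert_idem] at h
    exact absurd h (by have := card3_le a b c; omega)
  · rw [Finset.pair_eq_singleton] at h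
    exact absurd h (by have := card3_le a b c; omega)

lemma memG_of_eq {G : Finset (Finset V)} {s t : Finset V} (h : s = t) (ht : t ∈ G) : s ∈ G :=
  h ▸ ht

end Aux

set_option maxHeartbeats 1600000 in
/-- In an `F₃,₃`-free 3-graph on `n` vertices, the number of edges meeting a
`K⁴₃` on `{a,b,c,d}` in exactly one vertex is at most `m (n - 4)`. -/
theorem link_edges_le {V : Type*} [Fintype V] [DecidableEq V] (n : ℕ)
    (hV : Fintype.card V = n) (G : Finset (Finset V))
    (h3 : ∀ e ∈ G, e.card = 3) (hfree : F33Free G)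
    (a b c d : V) (habcd : ({a, b, c, d} : Finset V).card = 4)
    (hab : ({a, b, c} : Finset V) ∈ G) (habd : ({a, b, d} : Finset V) ∈ G)
    (hacd : ({a, c, d} : Finset V) ∈ G) (hbcd : ({b, c, d} : Finset V) ∈ G) :
    (G.filter (fun e => (e ∩ ({a, b, c, d} : Finset V)).card = 1)).card ≤ m (n - 4) := by
  obtain ⟨hab', hac', had', hbc', hbd', hcd'⟩ := four_distinct habcd
  set S : Finset V := {a, b, c, d} with hS
  set W : Finset V := Sᶜ with hWdef
  have hScard : S.card = 4 := habcd
  have hWcard : W.card = n - 4 := by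
    rw [hWdef, Finset.card_compl, hScard, hV]
  -- every 3-subset of S is an edge
  have hsub3 : ∀ T : Finset V, T ⊆ S → T.card = 3 → T ∈ G := by
    intro T hT hT3
    have hcd1 : (S \ T).card = 1 := by rw [Finset.card_sdiff_of_subset hT, hScard, hT3]
    obtain ⟨s, hs⟩ := Finset.card_eq_one.mp hcd1
    have hTeq : T = S \ {s} := by
      rw [← hs, Finset.sdiff_sdiff_self_left]
      exact (Finset.inter_eq_right.mpr hT).symm
    have hsS : s ∈ S := by
      have : s ∈ S \ T := by rw [hs]; simp
      exact (Finset.mem_sdiff.mp this).1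
    rw [hS] at hsS
    simp only [Finset.mem_insert, Finset.mem_singleton] at hsS
    rcases hsS with rfl | rfl | rfl | rfl
    · refine memG_of_eq (t := ({b, c, d} : Finset V)) ?_ hbcd
      rw [hTeq, hS]; ext z
      simp only [Finset.mem_sdiff, Finset.mem_insert, Finset.mem_singleton]
      constructor
      · rintro ⟨rfl | h1, h2⟩ <;> tauto
      · rintro (rfl | rfl | rfl) <;> exact ⟨by tauto, by tauto⟩
    · refine memG_of_eq (t := ({a, c, d} : Finset V)) ?_ hacd
      rw [hTeq, hS]; ext z
      simp only [Finset.mem_sdiff, Finset.mem_insert, Finset.mem_singleton]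
      constructor
      · rintro ⟨rfl | rfl | h1, h2⟩ <;> tauto
      · rintro (rfl | rfl | rfl) <;> exact ⟨by tauto, by tauto⟩
    · refine memG_of_eq (t := ({a, b, d} : Finset V)) ?_ habd
      rw [hTeq, hS]; ext z
      simp only [Finset.mem_sdiff, Finset.mem_insert, Finset.mem_singleton]
      constructor
      · rintro ⟨rfl | rfl | rfl | h1, h2⟩ <;> tauto
      · rintro (rfl | rfl | rfl) <;> exact ⟨by tauto, by tauto⟩
    · refine memG_of_eq (t := ({a, b, c} : Finset V)) ?_ hab
      rw [hTeq, hS]; ext z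
      simp only [Finset.mem_sdiff, Finset.mem_insert, Finset.mem_singleton]
      constructor
      · rintro ⟨rfl | rfl | rfl | rfl, h2⟩ <;> tauto
      · rintro (rfl | rfl | rfl) <;> exact ⟨by tauto, by tauto⟩
  have htriple : ∀ u v t : V, u ∈ S → v ∈ S → t ∈ S → u ≠ v → u ≠ t → v ≠ t →
      ({u, v, t} : Finset V) ∈ G := by
    intro u v t hu hv ht huv hut hvt
    refine hsub3 _ ?_ ?_
    · intro z hz
      simp only [Finset.mem_insert, Finset.mem_singleton] at hz
      rcases hz with rfl | rfl | rfl <;> assumption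
    · rw [Finset.card_insert_of_notMem (by simp [huv, hut]),
        Finset.card_insert_of_notMem (by simp [hvt]), Finset.card_singleton]
  set pairs : Finset (Finset V) := W.powersetCard 2 with hpairsdef
  set L : Finset V → ℕ := fun P => (S.filter (fun v => insert v P ∈ G)).card with hLdef
  -- Step A: the count is the sum of L over pairs
  have hPfacts : ∀ P ∈ pairs, P.card = 2 ∧ ∀ z ∈ P, z ∉ S := by
    intro P hP
    rw [hpairsdef, Finset.mem_powersetCard] at hP
    exact ⟨hP.2, fun z hz => by
      have := hP.1 hz
      rw [hWdef, Finset.mem_compl] at this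
      exact this⟩
  have hcount : (G.filter (fun e => (e ∩ S).card = 1)).card = ∑ P ∈ pairs, L P := by
    have hmaps : ∀ e ∈ G.filter (fun e => (e ∩ S).card = 1), e \ S ∈ pairs := by
      intro e he
      rw [Finset.mem_filter] at he
      rw [hpairsdef, Finset.mem_powersetCard]
      constructor
      · intro z hz
        rw [hWdef, Finset.mem_compl]
        exact (Finset.mem_sdiff.mp hz).2
      · have := Finset.card_sdiff_add_card_inter e S
        rw [he.2, h3 e he.1] at this
        omega
    rw [Finset.card_eq_sum_card_fiberwise hmaps]
    refine Finset.sum_congr rfl ?_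
    intro P hP
    obtain ⟨hP2, hPS⟩ := hPfacts P hP
    rw [hLdef]
    refine (Finset.card_bij (fun v _ => insert v P) ?_ ?_ ?_).symm
    · intro v hv
      rw [Finset.mem_filter] at hv
      obtain ⟨hvS, hvG⟩ := hv
      have hvP : v ∉ P := fun h => hPS v h hvS
      rw [Finset.mem_filter, Finset.mem_filter]
      refine ⟨⟨hvG, ?_⟩, ?_⟩
      · have : insert v P ∩ S = {v} := by
          ext z
          simp only [Finset.mem_inter, Finset.mem_insert, Finset.mem_singleton]
          constructor
          · rintro ⟨rfl | hz, hzS⟩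
            · rfl
            · exact absurd hzS (hPS z hz)
          · rintro rfl; exact ⟨Or.inl rfl, hvS⟩
        rw [this, Finset.card_singleton]
      · ext z
        simp only [Finset.mem_sdiff, Finset.mem_insert]
        constructor
        · rintro ⟨rfl | hz, hzS⟩
          · exact absurd hvS hzS
          · exact hz
        · intro hz; exact ⟨Or.inr hz, hPS z hz⟩
    · intro v hv v' hv' heq
      rw [Finset.mem_filter] at hv hv'
      have hvP : v ∉ P := fun h => hPS v h hv.1
      have hv'P : v' ∉ P := fun h => hPS v' h hv'.1
      have : v ∈ insert v' P := heq ▸ Finset.mem_insert_self v P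
      rcases Finset.mem_insert.mp this with h | h
      · exact h
      · exact absurd h hvP
    · intro e he
      rw [Finset.mem_filter, Finset.mem_filter] at he
      obtain ⟨⟨heG, he1⟩, heP⟩ := he
      obtain ⟨v, hv⟩ := Finset.card_eq_one.mp he1
      have hvS : v ∈ S := by
        have : v ∈ e ∩ S := by rw [hv]; simp
        exact (Finset.mem_inter.mp this).2
      have hve : v ∈ e := by
        have : v ∈ e ∩ S := by rw [hv]; simp
        exact (Finset.mem_inter.mp this).1
      have heq : insert v P = e := by
        rw [← heP]
        ext z
        simp only [Finset.mem_insert, Finset.mem_sdiff]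
        constructor
        · rintro (rfl | ⟨hz, _⟩)
          · exact hve
          · exact hz
        · intro hz
          by_cases hzS : z ∈ S
          · have : z ∈ e ∩ S := Finset.mem_inter.mpr ⟨hz, hzS⟩
            rw [hv, Finset.mem_singleton] at this
            exact Or.inl this
          · exact Or.inr ⟨hz, hzS⟩
      exact ⟨v, Finset.mem_filter.mpr ⟨hvS, by rw [heq]; exact heG⟩, heq⟩
  set H : Finset (Finset V) := pairs.filter (fun P => L P = 4) with hHdef
  set D : Finset (Finset V) := apexPairs W H with hDdef
  have hLfull : ∀ P ∈ H, ∀ v ∈ S, insert v P ∈ G := by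
    intro P hP v hv
    rw [hHdef, Finset.mem_filter] at hP
    have h4 : (S.filter (fun v => insert v P ∈ G)).card = 4 := hP.2
    have heq : S.filter (fun v => insert v P ∈ G) = S :=
      Finset.eq_of_subset_of_card_le (Finset.filter_subset _ _) (by omega)
    have : v ∈ S.filter (fun v => insert v P ∈ G) := by rw [heq]; exact hv
    exact (Finset.mem_filter.mp this).2
  -- Step C: pairs with an apex have L ≤ 2
  have hapex : ∀ P ∈ D, L P ≤ 2 := by
    intro P hPD
    rw [hDdef, mem_apexPairs, Finset.mem_powersetCard] at hPD
    obtain ⟨⟨hPW, hP2⟩, x, hxW, hxP, hall⟩ := hPD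
    obtain ⟨y, z, hyz, rfl⟩ := Finset.card_eq_two.mp hP2
    have hyW : y ∈ W := hPW (by simp)
    have hzW : z ∈ W := hPW (by simp)
    have hxy : x ≠ y := fun h => hxP (by simp [h])
    have hxz : x ≠ z := fun h => hxP (by simp [h])
    have hxyH : ({x, y} : Finset V) ∈ H := hall y (by simp)
    have hxzH : ({x, z} : Finset V) ∈ H := hall z (by simp)
    by_contra hgt
    push_neg at hgt
    have hgt' : 3 ≤ (S.filter (fun v => insert v ({y, z} : Finset V) ∈ G)).card := hgt
    obtain ⟨T', hT'sub, hT'3⟩ := Finset.exists_subset_card_eq hgt'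
    obtain ⟨u, v, t, huv, hut, hvt, rfl⟩ := Finset.card_eq_three.mp hT'3
    have hu := Finset.mem_filter.mp (hT'sub (by simp : u ∈ ({u, v, t} : Finset V)))
    have hv := Finset.mem_filter.mp (hT'sub (by simp : v ∈ ({u, v, t} : Finset V)))
    have ht := Finset.mem_filter.mp (hT'sub (by simp : t ∈ ({u, v, t} : Finset V)))
    refine hfree ⟨u, v, t, x, y, z, ?_, htriple u v t hu.1 hv.1 ht.1 huv hut hvt,
      hLfull _ hxyH u hu.1, hLfull _ hxzH u hu.1, hu.2,
      hLfull _ hxyH v hv.1, hLfull _ hxzH v hv.1, hv.2,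
      hLfull _ hxyH t ht.1, hLfull _ hxzH t ht.1, ht.2⟩
    have hunion : ({u, v, t, x, y, z} : Finset V) =
        ({u, v, t} : Finset V) ∪ ({x, y, z} : Finset V) := by
      ext w
      simp only [Finset.mem_insert, Finset.mem_union, Finset.mem_singleton]
      tauto
    have hnotS : ∀ w ∈ ({x, y, z} : Finset V), w ∉ S := by
      intro w hw
      have hwW : w ∈ W := by
        simp only [Finset.mem_insert, Finset.mem_singleton] at hw
        rcases hw with rfl | rfl | rfl <;> assumption
      rw [hWdef, Finset.mem_compl] at hwW
      exact hwW
    have hdisj : Disjoint ({u, v, t} : Finset V) ({x, y, z} : Finset V) := by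
      rw [Finset.disjoint_left]
      intro w hw hw2
      have hwS : w ∈ S := by
        simp only [Finset.mem_insert, Finset.mem_singleton] at hw
        rcases hw with rfl | rfl | rfl
        exacts [hu.1, hv.1, ht.1]
      exact hnotS w hw2 hwS
    have hc3 : ({x, y, z} : Finset V).card = 3 := by
      rw [Finset.card_insert_of_notMem (by simp [hxy, hxz]),
        Finset.card_insert_of_notMem (by simp [hyz]), Finset.card_singleton]
    rw [hunion, Finset.card_union_of_disjoint hdisj, hT'3, hc3]
  -- Step D
  have hHsub : H ⊆ pairs := Finset.filter_subset _ _
  have hDsub : D ⊆ pairs := by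
    rw [hDdef, hpairsdef]
    exact apexPairs_subset _ _
  have hsum : (∑ P ∈ pairs, L P) + D.card ≤ 3 * pairs.card + H.card := by
    have hpt : ∀ P ∈ pairs, L P + (if P ∈ D then 1 else 0) ≤ 3 + (if P ∈ H then 1 else 0) := by
      intro P hP
      by_cases hPH : P ∈ H
      · have h4 : L P = 4 := (Finset.mem_filter.mp hPH).2
        have hPD : P ∉ D := fun h => by have := hapex P h; omega
        simp [hPH, hPD, h4]
      · have hle4 : L P ≤ 4 := le_trans (Finset.card_filter_le _ _) (le_of_eq hScard)
        have hne4 : L P ≠ 4 := fun h => hPH (Finset.mem_filter.mpr ⟨hP, h⟩)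
        by_cases hPD : P ∈ D
        · have := hapex P hPD; simp only [hPH, hPD, if_true, if_false]; omega
        · simp only [hPH, hPD, if_true, if_false]; omega
    have hle := Finset.sum_le_sum hpt
    rw [Finset.sum_add_distrib, Finset.sum_add_distrib, Finset.sum_ite_mem, Finset.sum_ite_mem,
      Finset.inter_eq_right.mpr hDsub, Finset.inter_eq_right.mpr hHsub] at hle
    simpa [mul_comm] using hle
  have hgl : H.card ≤ D.card + W.card / 2 :=
    graph_lemma W.card W H le_rfl (Finset.filter_subset _ _)
  have hpc : pairs.card = W.card * (W.card - 1) / 2 := by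
    rw [hpairsdef, Finset.card_powersetCard, Nat.choose_two_right]
  calc (G.filter (fun e => (e ∩ S).card = 1)).card
      = ∑ P ∈ pairs, L P := hcount
    _ ≤ 3 * pairs.card + W.card / 2 := by omega
    _ = m W.card := by rw [hpc, m_eq]
    _ = m (n - 4) := by rw [hWcard]
end

section
/- Let G be an F_{3,3}-free 3-graph and let a,b,c,d be four distinct vertices such that all four triples among them are edges of G. For distinct vertices p,q outside {a,b,c,d} define w(pq) as the number of v ∈ {a,b,c,d} with {v,p,q} an edge of G, and let J be the graph on V(G) ∖ {a,b,c,d} whose edges are the pairs pq with w(pq) ≥ 3. Let t be any integer such that every colouring of the edges of the complete graph K_t with 4 colours contains a monochromatic triangle. Then J contains no complete subgraph on t vertices. -/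
/-- Auxiliary colouring: for a pair `p q`, a vertex index `i` (among `vs 0..3`)
with `{vs i, p, q} ∉ G`, if one exists; else `0`. -/
noncomputable def colfun {V : Type*} [DecidableEq V] (G : Finset (Finset V)) (vs : Fin 4 → V)
    (p q : V) : Fin 4 :=
  if h : ∃ i : Fin 4, ({vs i, p, q} : Finset V) ∉ G then h.choose else 0

lemma colfun_symm {V : Type*} [DecidableEq V] (G : Finset (Finset V)) (vs : Fin 4 → V)
    (p q : V) : colfun G vs p q = colfun G vs q p := by
  unfold colfun
  simp only [show ∀ i : Fin 4, ({vs i, p, q} : Finset V) = {vs i, q, p} from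
    fun i => by rw [Finset.pair_comm]]

lemma colfun_spec {V : Type*} [DecidableEq V] (G : Finset (Finset V)) (vs : Fin 4 → V)
    (p q : V) (j : Fin 4) (hnot : ({vs j, p, q} : Finset V) ∉ G) :
    ({vs (colfun G vs p q), p, q} : Finset V) ∉ G := by
  have h : ∃ i : Fin 4, ({vs i, p, q} : Finset V) ∉ G := ⟨j, hnot⟩
  rw [colfun, dif_pos h]
  exact h.choose_spec

lemma card_six {V : Type*} [DecidableEq V] {p q r x y z : V}
    (hpq : p ≠ q) (hpr : p ≠ r) (hpx : p ≠ x) (hpy : p ≠ y) (hpz : p ≠ z)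
    (hqr : q ≠ r) (hqx : q ≠ x) (hqy : q ≠ y) (hqz : q ≠ z)
    (hrx : r ≠ x) (hry : r ≠ y) (hrz : r ≠ z)
    (hxy : x ≠ y) (hxz : x ≠ z) (hyz : y ≠ z) :
    ({p, q, r, x, y, z} : Finset V).card = 6 := by
  rw [Finset.card_insert_of_notMem (by simp_all),
      Finset.card_insert_of_notMem (by simp_all),
      Finset.card_insert_of_notMem (by simp_all),
      Finset.card_insert_of_notMem (by simp_all),
      Finset.card_insert_of_notMem (by simp_all),
      Finset.card_singleton]

/-- If every 4-colouring of the edges of `K_t` has a monochromatic triangle, then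
the graph `J` of pairs of multiplicity at least 3 in the link multigraph of a
`K⁴₃` in an `F₃,₃`-free 3-graph contains no complete subgraph on `t` vertices. -/
theorem link_highMult_Kt_free {V : Type*} [DecidableEq V] (G : Finset (Finset V))
    (hfree : F33Free G) (a b c d : V) (habcd : ({a, b, c, d} : Finset V).card = 4)
    (hab : ({a, b, c} : Finset V) ∈ G) (habd : ({a, b, d} : Finset V) ∈ G)
    (hacd : ({a, c, d} : Finset V) ∈ G) (hbcd : ({b, c, d} : Finset V) ∈ G)
    (t : ℕ)
    (hRamsey : ∀ c : Sym2 (Fin t) → Fin 4, ∃ x y z : Fin t,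
      x ≠ y ∧ x ≠ z ∧ y ≠ z ∧ c s(x, y) = c s(x, z) ∧ c s(x, z) = c s(y, z)) :
    ¬ ∃ S : Finset V, S.card = t ∧ (∀ v ∈ S, v ∉ ({a, b, c, d} : Finset V)) ∧
      ∀ p ∈ S, ∀ q ∈ S, p ≠ q → 3 ≤ linkWeight G a b c d p q := by
  rintro ⟨S, hScard, hSdisj, hSw⟩
  -- pairwise distinctness of a b c d
  have card3 : ∀ x y z : V, ({x, y, z} : Finset V).card ≤ 3 := fun x y z =>
    (Finset.card_insert_le _ _).trans (Nat.succ_le_succ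
      ((Finset.card_insert_le _ _).trans (by simp)))
  have hcard_le : ∀ (x y z : V), ({a, b, c, d} : Finset V) ⊆ {x, y, z} → False :=
    fun x y z h => by
      have := (Finset.card_le_card h).trans (card3 x y z); omega
  have hab' : a ≠ b := fun h => hcard_le a c d (by subst h; intro u hu; simp at hu ⊢; tauto)
  have hac' : a ≠ c := fun h => hcard_le a b d (by subst h; intro u hu; simp at hu ⊢; tauto)
  have had' : a ≠ d := fun h => hcard_le a b c (by subst h; intro u hu; simp at hu ⊢; tauto)
  have hbc' : b ≠ c := fun h => hcard_le a b d (by subst h; intro u hu; simp at hu ⊢; tauto)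
  have hbd' : b ≠ d := fun h => hcard_le a b c (by subst h; intro u hu; simp at hu ⊢; tauto)
  have hcd' : c ≠ d := fun h => hcard_le a b c (by subst h; intro u hu; simp at hu ⊢; tauto)
  set vs : Fin 4 → V := ![a, b, c, d] with hvs
  have hvsmem : ∀ i : Fin 4, vs i ∈ ({a, b, c, d} : Finset V) := by
    intro i; fin_cases i <;> simp [hvs]
  have hvinj : ∀ i j : Fin 4, vs i = vs j → i = j := by
    intro i j
    fin_cases i <;> fin_cases j <;> intro h <;>
      first
        | rfl
        | exact absurd h hab' | exact absurd h hac' | exact absurd h had'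
        | exact absurd h hbc' | exact absurd h hbd' | exact absurd h hcd'
        | exact absurd h.symm hab' | exact absurd h.symm hac' | exact absurd h.symm had'
        | exact absurd h.symm hbc' | exact absurd h.symm hbd' | exact absurd h.symm hcd'
  -- enumeration of S
  obtain ⟨g, hginj, hgmem⟩ : ∃ g : Fin t → V, Function.Injective g ∧ ∀ k, g k ∈ S := by
    have e := (S.equivFinOfCardEq hScard).symm
    exact ⟨fun k => (e k : V), fun k l h => e.injective (Subtype.ext h), fun k => (e k).2⟩
  have hnm : ∀ v ∈ ({a, b, c, d} : Finset V), ∀ k : Fin t, v ≠ g k :=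
    fun v hv k h => hSdisj (g k) (hgmem k) (h ▸ hv)
  -- key property of the colouring
  have key : ∀ p q : Fin t, p ≠ q → ∀ j : Fin 4, j ≠ colfun G vs (g p) (g q) →
      ({vs j, g p, g q} : Finset V) ∈ G := by
    intro p q hpq j hj
    by_contra hnot
    have h1 := colfun_spec G vs (g p) (g q) j hnot
    have hvij : vs j ≠ vs (colfun G vs (g p) (g q)) := fun h => hj (hvinj _ _ h)
    have hw := hSw (g p) (hgmem p) (g q) (hgmem q) (fun h => hpq (hginj h))
    have hsub : (({a, b, c, d} : Finset V).filter
        (fun v => ({v, g p, g q} : Finset V) ∈ G))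
        ⊆ ({a, b, c, d} : Finset V) \ {vs j, vs (colfun G vs (g p) (g q))} := by
      intro u hu
      simp only [Finset.mem_filter, Finset.mem_sdiff, Finset.mem_insert,
        Finset.mem_singleton] at hu ⊢
      refine ⟨hu.1, ?_⟩
      rintro (rfl | rfl)
      · exact hnot hu.2
      · exact h1 hu.2
    have hle := Finset.card_le_card hsub
    have hsd : (({a, b, c, d} : Finset V) \
        {vs j, vs (colfun G vs (g p) (g q))}).card = 2 := by
      rw [Finset.card_sdiff_of_subset (by
        intro u hu
        simp only [Finset.mem_insert, Finset.mem_singleton] at hu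
        rcases hu with rfl | rfl
        · exact hvsmem j
        · exact hvsmem _), habcd, Finset.card_pair hvij]
    unfold linkWeight at hw
    omega
  -- apply Ramsey to the colouring
  obtain ⟨x, y, z, hxy, hxz, hyz, h1, h2⟩ := hRamsey (Sym2.lift
    ⟨fun p q => colfun G vs (g p) (g q), fun p q => colfun_symm G vs (g p) (g q)⟩)
  simp only [Sym2.lift_mk] at h1 h2
  have kxy := key x y hxy
  have kxz := key x z hxz
  have kyz := key y z hyz
  rw [← h1] at kxz
  rw [← h2, ← h1] at kyz
  obtain ⟨iv, hiv⟩ : ∃ i0, colfun G vs (g x) (g y) = i0 := ⟨_, rfl⟩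
  rw [hiv] at kxy kxz kyz
  have hgxy : g x ≠ g y := fun h => hxy (hginj h)
  have hgxz : g x ≠ g z := fun h => hxz (hginj h)
  have hgyz : g y ≠ g z := fun h => hyz (hginj h)
  have hma : ∀ k : Fin t, a ≠ g k := hnm a (by simp)
  have hmb : ∀ k : Fin t, b ≠ g k := hnm b (by simp)
  have hmc : ∀ k : Fin t, c ≠ g k := hnm c (by simp)
  have hmd : ∀ k : Fin t, d ≠ g k := hnm d (by simp)
  apply hfree
  fin_cases iv
  · exact ⟨b, c, d, g x, g y, g z,
      card_six hbc' hbd' (hmb x) (hmb y) (hmb z) hcd' (hmc x) (hmc y) (hmc z)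
        (hmd x) (hmd y) (hmd z) hgxy hgxz hgyz, hbcd,
      kxy 1 (by decide), kxz 1 (by decide), kyz 1 (by decide),
      kxy 2 (by decide), kxz 2 (by decide), kyz 2 (by decide),
      kxy 3 (by decide), kxz 3 (by decide), kyz 3 (by decide)⟩
  · exact ⟨a, c, d, g x, g y, g z,
      card_six hac' had' (hma x) (hma y) (hma z) hcd' (hmc x) (hmc y) (hmc z)
        (hmd x) (hmd y) (hmd z) hgxy hgxz hgyz, hacd,
      kxy 0 (by decide), kxz 0 (by decide), kyz 0 (by decide),
      kxy 2 (by decide), kxz 2 (by decide), kyz 2 (by decide),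
      kxy 3 (by decide), kxz 3 (by decide), kyz 3 (by decide)⟩
  · exact ⟨a, b, d, g x, g y, g z,
      card_six hab' had' (hma x) (hma y) (hma z) hbd' (hmb x) (hmb y) (hmb z)
        (hmd x) (hmd y) (hmd z) hgxy hgxz hgyz, habd,
      kxy 0 (by decide), kxz 0 (by decide), kyz 0 (by decide),
      kxy 1 (by decide), kxz 1 (by decide), kyz 1 (by decide),
      kxy 3 (by decide), kxz 3 (by decide), kyz 3 (by decide)⟩
  · exact ⟨a, b, c, g x, g y, g z,
      card_six hab' hac' (hma x) (hma y) (hma z) hbc' (hmb x) (hmb y) (hmb z)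
        (hmc x) (hmc y) (hmc z) hgxy hgxz hgyz, hab,
      kxy 0 (by decide), kxz 0 (by decide), kyz 0 (by decide),
      kxy 1 (by decide), kxz 1 (by decide), kyz 1 (by decide),
      kxy 2 (by decide), kxz 2 (by decide), kyz 2 (by decide)⟩
end
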